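/- arXiv:1907.09431 — 3 statements merged into one kernel-verified Lean document; each statement's English description precedes it below -/
import Mathlib

section
/- There is a constant C depending only on K and a such that η(𝔮;a) ≤ C · 2^{ω_K(𝔮)} for all nonzero ideals 𝔮 of O_K. -/
open NumberField

noncomputable section

namespace ManinSplitTorsor

variable {K : Type*} [Field K] [NumberField K]

/-- The ideal `𝔤′` with `v_p(𝔤′) = ⌈v_p(𝔤)/2⌉` for all primes `p`:
the largest ideal whose square is divisible by `g`. -/
def sqrtCeil (g : Ideal (𝓞 K)) : Ideal (𝓞 K) :=
  sSup {J : Ideal (𝓞 K) | g ∣ J ^ 2}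

/-- The ideal `𝔮 𝔤⁻¹ 𝔤′` where `𝔤 = 𝔮 + aO_K`. -/
def etaMod (a : 𝓞 K) (q : Ideal (𝓞 K)) : Ideal (𝓞 K) :=
  sSup {J : Ideal (𝓞 K) |
    q * sqrtCeil (q + Ideal.span {a}) ∣ J * (q + Ideal.span {a})}

/-- `η(𝔮; a)`: the number of `ρ (mod 𝔮𝔤⁻¹𝔤′)` with `ρ O_K + 𝔮𝔤⁻¹𝔤′ = 𝔤′` and
`ρ² ≡ a (mod 𝔮)`. -/
def eta (a : 𝓞 K) (q : Ideal (𝓞 K)) : ℕ :=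
  Nat.card {ρ : 𝓞 K ⧸ etaMod a q //
    ∃ r : 𝓞 K, Ideal.Quotient.mk (etaMod a q) r = ρ ∧
      Ideal.span {r} + etaMod a q = sqrtCeil (q + Ideal.span {a}) ∧
      r ^ 2 - a ∈ q}

open Classical in
/-- `v_p(𝔮)`, the exponent of the prime `p` in the factorization of the ideal `𝔮`. -/
def vP (p q : Ideal (𝓞 K)) : ℕ :=
  (UniqueFactorizationMonoid.normalizedFactors q).count p

/-- `v_p(a)` for an element `a` of the ring of integers. -/
def vE (p : Ideal (𝓞 K)) (a : 𝓞 K) : ℕ := vP p (Ideal.span {a})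

open Classical in
/-- `ω_K(𝔮)`, the number of distinct prime ideals dividing `𝔮`. -/
def omegaK (q : Ideal (𝓞 K)) : ℕ :=
  (UniqueFactorizationMonoid.normalizedFactors q).toFinset.card

open Classical in
/-- The Legendre symbol `(a|p)`: `1` if `a` is a quadratic residue mod `p`, `-1` otherwise. -/
def legendreSym (a : 𝓞 K) (p : Ideal (𝓞 K)) : ℤ :=
  if ∃ x : 𝓞 K, x ^ 2 - a ∈ p then 1 else -1

open Classical in
/-- The Legendre symbol `(a/π_p^{v_p(a)} | p)` for a uniformizer `π_p`
(well defined when `v_p(a)` is even and `p ∤ 2`). -/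
def legendreUnit (a : 𝓞 K) (p : Ideal (𝓞 K)) : ℤ :=
  if ∃ π x : 𝓞 K, π ∈ p ∧ π ∉ p ^ 2 ∧
      a - x ^ 2 * π ^ vE p a ∈ p ^ (vE p a + 1) then 1 else -1

/-- The quantity `s_a(p)` (for `p ∣ 2` with `v_p(a)` even). -/
def sA (a : 𝓞 K) (p : Ideal (𝓞 K)) : ℝ :=
  (1 - 1 / (Ideal.absNorm p : ℝ)) *
      ∑ k ∈ Finset.range (vE p (4 : 𝓞 K)),
        (eta a (p ^ (vE p a + k + 1)) : ℝ) / (Ideal.absNorm p : ℝ) ^ k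
    + (eta a (p ^ (vE p (4 * a) + 1)) : ℝ) / (Ideal.absNorm p : ℝ) ^ vE p (4 : 𝓞 K)

open Classical in
/-- The quantity `r_a(p)`. -/
def rA (a : 𝓞 K) (p : Ideal (𝓞 K)) : ℝ :=
  if ¬ p ∣ Ideal.span {2 * a} then (legendreSym a p : ℝ)
  else if Odd (vE p a) then
    1 - 1 / (Ideal.absNorm p : ℝ) ^ (vE p a / 2) * (1 + 1 / (Ideal.absNorm p : ℝ))
  else if ¬ p ∣ Ideal.span {(2 : 𝓞 K)} then
    1 - 1 / (Ideal.absNorm p : ℝ) ^ (vE p a / 2) * (1 - (legendreUnit a p : ℝ))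
  else
    1 - 1 / (Ideal.absNorm p : ℝ) ^ (vE p a / 2) * (2 - sA a p)

open Classical in
/-- The character `χ` modulo `8aO_K` built from the Legendre symbol. -/
def chiA (a : 𝓞 K) (q : Ideal (𝓞 K)) : ℤ :=
  if q ⊔ Ideal.span {2 * a} = ⊤ then
    ((UniqueFactorizationMonoid.normalizedFactors q).map (legendreSym a)).prod
  else 0

/-- The residue `ρ_K` of the Dedekind zeta function of `K` at `s = 1`. -/
def rhoK (K : Type*) [Field K] [NumberField K] : ℝ :=
  (2 ^ InfinitePlace.nrRealPlaces K * (2 * Real.pi) ^ InfinitePlace.nrComplexPlaces K *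
      Units.regulator K * classNumber K) /
    (Nat.card (Units.torsion K) * Real.sqrt |(discr K : ℝ)|)

/-!
Every class counted by `η(𝔮; a)` lifts to a square root of `a` in `O_K/𝔮`, so it suffices to count
those. Fix one root `r₀`. For any root `r` and prime `p ∣ 𝔮`, the ideals `(r - r₀) + 𝔮` and
`(r + r₀) + 𝔮` have `p`-adic valuations adding up to at least `v_p(𝔮)`, since their product lies
in `𝔮`, while the smaller one is at most `v_p(4a)`, since `4a = (2r₀)² - 4(r₀² - a)` lies in their
sum. Hence the signature `(r + r₀) + 𝔮 + rad(𝔮)·4a`, one of at most `2^{ω(𝔮) + Ω(4a)}` divisors of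
`rad(𝔮)·4a`, determines `r` up to the annihilator of `4a` in `O_K/𝔮`, which has at most `N(4a)`
elements.
-/

open UniqueFactorizationMonoid

local notation "ν[" p "] " I:max => Multiset.count p (normalizedFactors I)

section Valuation

variable {R : Type*} [CommRing R] [IsDedekindDomain R]

theorem le_pow_iff_le_count {p I : Ideal R} (hp : Prime p) (hI : I ≠ ⊥) {n : ℕ} :
    I ≤ p ^ n ↔ n ≤ ν[p] I := by
  rw [← Ideal.dvd_iff_le, pow_dvd_iff_le_emultiplicity,
    emultiplicity_eq_count_normalizedFactors hp.irreducible hI, normalize_eq, Nat.cast_le]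

theorem count_normalizedFactors_mul {I J : Ideal R} (hI : I ≠ ⊥) (hJ : J ≠ ⊥) (p : Ideal R) :
    ν[p] (I * J) = ν[p] I + ν[p] J := by
  rw [normalizedFactors_mul hI hJ, Multiset.count_add]

theorem count_normalizedFactors_sup {I J : Ideal R} (hI : I ≠ ⊥) (hJ : J ≠ ⊥) (p : Ideal R) :
    ν[p] (I ⊔ J) = min (ν[p] I) (ν[p] J) := by
  rw [Ideal.sup_eq_prod_inf_factors hI hJ, normalizedFactors_prod_inter_eq_inter,
    Multiset.count_inter]

end Valuation

section SquareRoots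

variable {R : Type*} [CommRing R] {q : Ideal R} {a r₀ r : R}

theorem sup_span_sub_mul_sup_span_add_le (h₀ : r₀ ^ 2 - a ∈ q) (h : r ^ 2 - a ∈ q) :
    (Ideal.span {r - r₀} ⊔ q) * (Ideal.span {r + r₀} ⊔ q) ≤ q := by
  have hprod : (r - r₀) * (r + r₀) ∈ q := by
    convert q.sub_mem h h₀ using 1
    ring
  rw [Ideal.sup_mul, Ideal.mul_sup, Ideal.mul_sup, Ideal.span_singleton_mul_span_singleton]
  exact sup_le (sup_le ((Ideal.span_singleton_le_iff_mem q).mpr hprod) Ideal.mul_le_right)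
    (sup_le Ideal.mul_le_left Ideal.mul_le_left)

theorem four_mul_mem_sup_span_sub_sup_span_add (h₀ : r₀ ^ 2 - a ∈ q) (r : R) :
    4 * a ∈ (Ideal.span {r - r₀} ⊔ q) ⊔ (Ideal.span {r + r₀} ⊔ q) := by
  have hsub : r - r₀ ∈ (Ideal.span {r - r₀} ⊔ q) ⊔ (Ideal.span {r + r₀} ⊔ q) :=
    Ideal.mem_sup_left (Ideal.mem_sup_left (Ideal.mem_span_singleton_self _))
  have hadd : r + r₀ ∈ (Ideal.span {r - r₀} ⊔ q) ⊔ (Ideal.span {r + r₀} ⊔ q) :=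
    Ideal.mem_sup_right (Ideal.mem_sup_left (Ideal.mem_span_singleton_self _))
  have hq : r₀ ^ 2 - a ∈ (Ideal.span {r - r₀} ⊔ q) ⊔ (Ideal.span {r + r₀} ⊔ q) :=
    Ideal.mem_sup_left (Ideal.mem_sup_right h₀)
  rw [show 4 * a = ((r + r₀) - (r - r₀)) ^ 2 - 4 * (r₀ ^ 2 - a) by ring]
  exact sub_mem (Ideal.pow_mem_of_mem _ (sub_mem hadd hsub) 2 two_pos) (Ideal.mul_mem_left _ _ hq)

end SquareRoots

section Signature

variable {R : Type*} [CommRing R] [IsDedekindDomain R] {q : Ideal R} {a r₀ r r' : R}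

/-- At a prime `p ∣ q` (and `4a ≠ 0`) its valuation is `min (v_p((r + r₀) + q)) (v_p(4a) + 1)`. -/
def rootSignature (q : Ideal R) (a r₀ r : R) : Ideal R :=
  Ideal.span {r + r₀} ⊔ q ⊔ radical q * Ideal.span {4 * a}

theorem count_le_count_sup_span_sub_add_count_sup_span_add (hq : q ≠ ⊥)
    (h₀ : r₀ ^ 2 - a ∈ q) (h : r ^ 2 - a ∈ q) (p : Ideal R) :
    ν[p] q ≤ ν[p] (Ideal.span {r - r₀} ⊔ q) + ν[p] (Ideal.span {r + r₀} ⊔ q) := by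
  have hsup (x : R) : Ideal.span {x} ⊔ q ≠ ⊥ := ne_bot_of_le_ne_bot hq le_sup_right
  rw [← count_normalizedFactors_mul (hsup _) (hsup _)]
  exact Ideal.count_le_of_ideal_ge (sup_span_sub_mul_sup_span_add_le h₀ h)
    (mul_ne_zero (hsup _) (hsup _)) p

theorem min_count_sup_span_sub_count_sup_span_add_le (hq : q ≠ ⊥) (ha : 4 * a ≠ 0)
    (h₀ : r₀ ^ 2 - a ∈ q) (r : R) (p : Ideal R) :
    min (ν[p] (Ideal.span {r - r₀} ⊔ q)) (ν[p] (Ideal.span {r + r₀} ⊔ q)) ≤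
      ν[p] (Ideal.span {4 * a}) := by
  rw [← count_normalizedFactors_sup (ne_bot_of_le_ne_bot hq le_sup_right)
    (ne_bot_of_le_ne_bot hq le_sup_right)]
  exact Ideal.count_le_of_ideal_ge
    ((Ideal.span_singleton_le_iff_mem _).mpr (four_mul_mem_sup_span_sub_sup_span_add h₀ r))
    (by simpa using ha) p

theorem count_rootSignature (hq : q ≠ ⊥) (ha : 4 * a ≠ 0) (p : Ideal R) :
    ν[p] (rootSignature q a r₀ r) =
      min (ν[p] (Ideal.span {r + r₀} ⊔ q)) (ν[p] (radical q * Ideal.span {4 * a})) :=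
  count_normalizedFactors_sup (ne_bot_of_le_ne_bot hq le_sup_right)
    (mul_ne_zero radical_ne_zero (by simpa using ha)) p

theorem count_span_lt_count_radical_mul_span {p : Ideal R} (hp : p ∈ normalizedFactors q)
    {d : R} (hd : d ≠ 0) :
    ν[p] (Ideal.span {d}) < ν[p] (radical q * Ideal.span {d}) := by
  have hrad : p ∈ normalizedFactors (radical q) := by
    rwa [← primeFactors_val_eq_normalizedFactors isRadical_radical, primeFactors_radical,
      Finset.mem_val, mem_primeFactors]
  rw [count_normalizedFactors_mul radical_ne_zero (by simpa using hd)]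
  have := Multiset.count_pos.mpr hrad
  omega

theorem count_le_count_add_count_of_rootSignature_eq (hq : q ≠ ⊥) (ha : 4 * a ≠ 0)
    (h₀ : r₀ ^ 2 - a ∈ q) (h : r ^ 2 - a ∈ q) (h' : r' ^ 2 - a ∈ q)
    (hsig : rootSignature q a r₀ r = rootSignature q a r₀ r') {p : Ideal R}
    (hp : p ∈ normalizedFactors q) :
    ν[p] q ≤ ν[p] (Ideal.span {4 * a}) + ν[p] (Ideal.span {r - r'} ⊔ q) := by
  have hpp : Prime p := prime_of_normalized_factor p hp
  have mem_pow {x : R} {n : ℕ} (hn : n ≤ ν[p] (Ideal.span {x} ⊔ q)) : x ∈ p ^ n :=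
    (le_pow_iff_le_count hpp (ne_bot_of_le_ne_bot hq le_sup_right)).mpr hn
      (Ideal.mem_sup_left (Ideal.mem_span_singleton_self x))
  have le_count {n : ℕ} (hn : n ≤ ν[p] q) (hmem : r - r' ∈ p ^ n) :
      n ≤ ν[p] (Ideal.span {r - r'} ⊔ q) :=
    (le_pow_iff_le_count hpp (ne_bot_of_le_ne_bot hq le_sup_right)).mp
      (sup_le ((Ideal.span_singleton_le_iff_mem _).mpr hmem) ((le_pow_iff_le_count hpp hq).mpr hn))
  have hsig' := congrArg (fun I => ν[p] I) hsig
  simp only [count_rootSignature hq ha] at hsig'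
  have := count_span_lt_count_radical_mul_span hp ha
  have := count_le_count_sup_span_sub_add_count_sup_span_add hq h₀ h p
  have := count_le_count_sup_span_sub_add_count_sup_span_add hq h₀ h' p
  have := min_count_sup_span_sub_count_sup_span_add_le hq ha h₀ r p
  have := min_count_sup_span_sub_count_sup_span_add_le hq ha h₀ r' p
  set e := ν[p] q
  set δ := ν[p] (Ideal.span {4 * a})
  set y := ν[p] (Ideal.span {r + r₀} ⊔ q)
  -- The signatures determine `y` when `y ≤ δ` and record `δ < y` otherwise: in the first case
  -- `r` and `r'` are both close to `r₀`, in the second both close to `-r₀`.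
  by_cases hy : y ≤ δ
  · have := le_count (n := e - y) (by omega) <| by
      rw [show r - r' = (r - r₀) - (r' - r₀) by ring]
      exact sub_mem (mem_pow (by omega)) (mem_pow (by omega))
    omega
  · have := le_count (n := e - δ) (by omega) <| by
      rw [show r - r' = (r + r₀) - (r' + r₀) by ring]
      exact sub_mem (mem_pow (by omega)) (mem_pow (by omega))
    omega

theorem four_mul_mul_sub_mem_of_rootSignature_eq (hq : q ≠ ⊥) (h₀ : r₀ ^ 2 - a ∈ q)
    (h : r ^ 2 - a ∈ q) (h' : r' ^ 2 - a ∈ q)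
    (hsig : rootSignature q a r₀ r = rootSignature q a r₀ r') :
    4 * a * (r - r') ∈ q := by
  rcases eq_or_ne (4 * a) 0 with ha | ha
  · simp [ha]
  have hspan : Ideal.span {4 * a} ≠ ⊥ := by simpa using ha
  have hsup : Ideal.span {r - r'} ⊔ q ≠ ⊥ := ne_bot_of_le_ne_bot hq le_sup_right
  have hdvd : q ∣ Ideal.span {4 * a} * (Ideal.span {r - r'} ⊔ q) := by
    rw [dvd_iff_normalizedFactors_le_normalizedFactors hq (mul_ne_zero hspan hsup),
      Multiset.le_iff_count]
    intro p
    by_cases hp : p ∈ normalizedFactors q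
    · rw [count_normalizedFactors_mul hspan hsup]
      exact count_le_count_add_count_of_rootSignature_eq hq ha h₀ h h' hsig hp
    · simp [Multiset.count_eq_zero.mpr hp]
  exact Ideal.le_of_dvd hdvd
    (Ideal.mul_mem_mul (Ideal.mem_span_singleton_self _)
      (Ideal.mem_sup_left (Ideal.mem_span_singleton_self _)))

end Signature

section Counting

theorem card_le_two_pow_card_normalizedFactors_of_forall_dvd {α : Type*} [CommMonoidWithZero α]
    [UniqueFactorizationMonoid α] [NormalizationMonoid α] [Subsingleton αˣ]
    {s : Finset α} {N : α} (hN : N ≠ 0) (hs : ∀ x ∈ s, x ∣ N) :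
    s.card ≤ 2 ^ Multiset.card (normalizedFactors N) := by
  classical
  have hne {x : α} (hx : x ∈ s) : x ≠ 0 := fun h => hN (zero_dvd_iff.mp (h ▸ hs x hx))
  calc s.card ≤ (normalizedFactors N).powerset.toFinset.card := by
        refine Finset.card_le_card_of_injOn normalizedFactors (fun x hx => ?_)
          fun x hx y hy hxy => ?_
        · simpa using (dvd_iff_normalizedFactors_le_normalizedFactors (hne hx) hN).mp (hs x hx)
        · exact associated_iff_eq.mp
            ((associated_iff_normalizedFactors_eq_normalizedFactors (hne hx) (hne hy)).mpr hxy)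
    _ ≤ Multiset.card (normalizedFactors N).powerset := Multiset.toFinset_card_le _
    _ = 2 ^ Multiset.card (normalizedFactors N) := Multiset.card_powerset _

theorem card_le_natCard_of_mul_sub_eq_zero {A : Type*} [CommRing A] [Finite A] {c : A}
    {s : Finset A} (hs : ∀ x ∈ s, ∀ y ∈ s, c * (x - y) = 0) :
    s.card ≤ Nat.card {z : A // c * z = 0} := by
  rcases s.eq_empty_or_nonempty with rfl | ⟨x₀, hx₀⟩
  · simp
  rw [← Nat.card_eq_finsetCard]
  exact Nat.card_le_card_of_injective (fun x => ⟨x - x₀, hs x x.2 x₀ hx₀⟩)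
    fun x y hxy => Subtype.ext (sub_left_inj.mp (congrArg Subtype.val hxy))

variable {R : Type*} [CommRing R] [IsDedekindDomain R] [Module.Free ℤ R] [Module.Finite ℤ R]

theorem natCard_annihilator_le_absNorm {q : Ideal R} (hq : q ≠ ⊥) {d : R} (hd : d ≠ 0) :
    Nat.card {x : R ⧸ q // Ideal.Quotient.mk q d * x = 0} ≤ Ideal.absNorm (Ideal.span {d}) := by
  have := Ideal.finiteQuotientOfFreeOfNeBot q hq
  set A : Ideal R := Submodule.comap (LinearMap.mulLeft R d) q
  have hqA : q ≤ A := fun z hz => q.mul_mem_left d hz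
  have hdA : Ideal.span {d} * A ≤ q := Ideal.span_singleton_mul_le_iff.mpr fun z hz => hz
  have hA : Ideal.absNorm A ≠ 0 := mt Ideal.absNorm_eq_zero_iff.mp (ne_bot_of_le_ne_bot hq hqA)
  have hcard : Nat.card (Submodule.map q.mkQ A) * Ideal.absNorm A = Ideal.absNorm q := by
    simpa only [Ideal.absNorm_apply, Submodule.cardQuot_apply]
      using Submodule.card_quotient_mul_card_quotient A q hqA
  have hmap : Nat.card (Submodule.map q.mkQ A) ≤ Ideal.absNorm (Ideal.span {d}) := by
    refine Nat.le_of_dvd (Nat.pos_of_ne_zero (by simpa using hd))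
      (Nat.dvd_of_mul_dvd_mul_right (Nat.pos_of_ne_zero hA) ?_)
    rw [hcard, ← map_mul]
    exact Ideal.absNorm_dvd_absNorm_of_le hdA
  have hmem (x : {x : R ⧸ q // Ideal.Quotient.mk q d * x = 0}) :
      x.1 ∈ Submodule.map q.mkQ A := by
    obtain ⟨z, hz⟩ := Ideal.Quotient.mk_surjective x.1
    have hx := x.2
    rw [← hz, ← map_mul, Ideal.Quotient.eq_zero_iff_mem] at hx
    exact ⟨z, hx, hz⟩
  refine le_trans ?_ hmap
  exact Nat.card_le_card_of_injective (fun x => ⟨x.1, hmem x⟩)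
    fun x y hxy => Subtype.ext (Subtype.mk.inj hxy)

theorem natCard_sq_eq_le {q : Ideal R} (hq : q ≠ ⊥) {a : R} (ha : 4 * a ≠ 0) :
    Nat.card {ρ : R ⧸ q // ρ ^ 2 = Ideal.Quotient.mk q a} ≤
      Ideal.absNorm (Ideal.span {4 * a}) *
        2 ^ Multiset.card (normalizedFactors (Ideal.span {4 * a})) * 2 ^ (primeFactors q).card := by
  classical
  have := Ideal.finiteQuotientOfFreeOfNeBot q hq
  have := Fintype.ofFinite (R ⧸ q)
  have hroot {ρ : R ⧸ q} : ρ ^ 2 = Ideal.Quotient.mk q a ↔ ρ.out ^ 2 - a ∈ q := by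
    rw [← Ideal.Quotient.eq, map_pow, Ideal.Quotient.mk_out]
  set roots := Finset.univ.filter fun ρ : R ⧸ q => ρ ^ 2 = Ideal.Quotient.mk q a
  rw [Nat.card_eq_fintype_card, Fintype.card_subtype]
  rcases roots.eq_empty_or_nonempty with hempty | ⟨ρ₀, hρ₀⟩
  · simp [roots, hempty]
  set sig : R ⧸ q → Ideal R := fun ρ => rootSignature q a ρ₀.out ρ.out
  have hfiber : ∀ b ∈ roots.image sig, (roots.filter (sig · = b)).card ≤
      Ideal.absNorm (Ideal.span {4 * a}) := by
    intro b _
    refine (card_le_natCard_of_mul_sub_eq_zero fun x hx y hy => ?_).trans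
      (natCard_annihilator_le_absNorm hq ha)
    simp only [Finset.mem_filter, Finset.mem_univ, true_and, roots] at hx hy hρ₀
    have := four_mul_mul_sub_mem_of_rootSignature_eq hq (hroot.mp hρ₀) (hroot.mp hx.1)
      (hroot.mp hy.1) (hx.2.trans hy.2.symm)
    rwa [← Ideal.Quotient.eq_zero_iff_mem, map_mul, map_sub, Ideal.Quotient.mk_out,
      Ideal.Quotient.mk_out] at this
  have himage : (roots.image sig).card ≤
      2 ^ ((primeFactors q).card + Multiset.card (normalizedFactors (Ideal.span {4 * a}))) := by
    have hN : radical q * Ideal.span {4 * a} ≠ ⊥ := mul_ne_zero radical_ne_zero (by simpa using ha)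
    refine (card_le_two_pow_card_normalizedFactors_of_forall_dvd hN fun b hb => ?_).trans_eq ?_
    · obtain ⟨ρ, -, rfl⟩ := Finset.mem_image.mp hb
      exact Ideal.dvd_iff_le.mpr le_sup_right
    · rw [normalizedFactors_mul radical_ne_zero (by simpa using ha), Multiset.card_add,
        ← primeFactors_val_eq_normalizedFactors isRadical_radical, primeFactors_radical]
      rfl
  calc roots.card ≤ Ideal.absNorm (Ideal.span {4 * a}) * (roots.image sig).card :=
        Finset.card_le_mul_card_image _ _ hfiber
    _ ≤ _ := by
        rw [mul_assoc, ← pow_add, add_comm]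
        exact Nat.mul_le_mul_left _ himage

end Counting

theorem le_sqrtCeil {F : Type*} [Field F] (g : Ideal (𝓞 F)) : g ≤ sqrtCeil g :=
  le_sSup (show g ∣ g ^ 2 from Dvd.intro g (sq g).symm)

theorem le_etaMod (a : 𝓞 K) (q : Ideal (𝓞 K)) : q ≤ etaMod a q :=
  le_sSup (Ideal.dvd_iff_le.mpr (Ideal.mul_mono_right (le_sqrtCeil _)))

theorem eta_le_natCard_sq_eq (a : 𝓞 K) {q : Ideal (𝓞 K)} (hq : q ≠ ⊥) :
    eta a q ≤ Nat.card {ρ : 𝓞 K ⧸ q // ρ ^ 2 = Ideal.Quotient.mk q a} := by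
  have := Ideal.finiteQuotientOfFreeOfNeBot q hq
  refine Nat.card_le_card_of_injective (fun ρ => ⟨Ideal.Quotient.mk q ρ.2.choose, ?_⟩)
    fun ρ ρ' h => Subtype.ext ?_
  · rw [← map_pow, Ideal.Quotient.eq]
    exact ρ.2.choose_spec.2.2
  · rw [← ρ.2.choose_spec.1, ← ρ'.2.choose_spec.1, Ideal.Quotient.eq]
    exact le_etaMod a q (Ideal.Quotient.eq.mp (Subtype.mk.inj h))

/-- `η(𝔮;a) ≤ C · 2^{ω_K(𝔮)}` for a constant `C` depending only on `K` and `a`. -/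
theorem eta_le_const_mul_two_pow_omega (a : 𝓞 K)
    (ha : ¬ IsSquare (algebraMap (𝓞 K) K a)) :
    ∃ C : ℝ, ∀ q : Ideal (𝓞 K), q ≠ 0 →
      (eta a q : ℝ) ≤ C * 2 ^ omegaK q := by
  have h4a : (4 : 𝓞 K) * a ≠ 0 := mul_ne_zero (by norm_num) fun h => ha ⟨0, by simp [h]⟩
  refine ⟨Ideal.absNorm (Ideal.span {4 * a}) *
    2 ^ Multiset.card (normalizedFactors (Ideal.span {4 * a})), fun q hq => ?_⟩
  have := (eta_le_natCard_sq_eq a hq).trans (natCard_sq_eq_le hq h4a)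
  rw [omegaK, toFinset_normalizedFactors]
  exact_mod_cast this

end ManinSplitTorsor
end
end

section
/- There is a constant C depending only on K such that the following holds. Let 𝔞 be a nonzero fractional ideal of K, b ∈ K, and for each archimedean place v of K let y_v ∈ K_v and c_v > 0. Let 𝔅 := {a′ ∈ K : |σ_v(a′)² − y_v|_v ≤ c_v for all v | ∞}. Then #((b + 𝔞) ∩ 𝔅) ≤ C · ((∏_{v|∞} c_v)^{1/2} / N𝔞 + 1). -/
open NumberField

noncomputable section

namespace ManinSplitTorsor

variable {K : Type*} [Field K] [NumberField K]

open scoped nonZeroDivisors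

/-! Sort the points by the quadrants containing their images `σ_w(a)`. For `z, z'` in one
quadrant, `‖z - z'‖ ≤ ‖z + z'‖`, hence `‖z - z'‖² ≤ ‖z² - z'²‖ ≤ 2 c_w^{1/m_w}`: inside one class
the images at `w` lie in a disc of radius `ρ_w = (2 c_w^{1/m_w})^{1/2}`. Cut these discs into
grids of `(M + 1)^{m_w}` cells of diameter at most `4ρ_w/M`. Two distinct points of `b + 𝔞` in
the same cell differ by some `0 ≠ x ∈ 𝔞`, and
`N𝔞 ≤ |N(x)| = ∏_w ‖σ_w x‖^{m_w} ≤ (4/M)^n ∏_w ρ_w^{m_w}`,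
which is impossible once `M^n > 4^n ∏_w ρ_w^{m_w} / N𝔞`. Taking `M` of size
`(4^n ∏_w ρ_w^{m_w} / N𝔞)^{1/n} + 1` bounds the count by `4^{#places} (M + 1)^n`. -/

theorem finite_and_ncard_le_of_forall_fiber {α ι : Type*} [Fintype ι] (S : Set α) (f : α → ι)
    {B : ℝ} (h : ∀ i, {a ∈ S | f a = i}.Finite ∧ ({a ∈ S | f a = i}.ncard : ℝ) ≤ B) :
    S.Finite ∧ (S.ncard : ℝ) ≤ Fintype.card ι * B := by
  have hS : S = ⋃ i, {a ∈ S | f a = i} := by ext; simp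
  rw [hS]
  refine ⟨Set.finite_iUnion fun i => (h i).1, ?_⟩
  calc ((⋃ i, {a ∈ S | f a = i}).ncard : ℝ) ≤ ∑ i, ({a ∈ S | f a = i}.ncard : ℝ) := by
        exact_mod_cast Set.ncard_iUnion_le_of_fintype _
    _ ≤ ∑ _i : ι, B := Finset.sum_le_sum fun i _ => (h i).2
    _ = Fintype.card ι * B := by simp

theorem exists_lt_pow_and_add_one_pow_le {n : ℕ} (hn : n ≠ 0) {X : ℝ} (hX : 0 ≤ X) :
    ∃ M : ℕ, 0 < M ∧ X < (M : ℝ) ^ n ∧ ((M : ℝ) + 1) ^ n ≤ 3 ^ n * (X + 1) := by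
  set x := X ^ (n⁻¹ : ℝ)
  have hx : 0 ≤ x := by positivity
  have hxn : x ^ n = X := Real.rpow_inv_natCast_pow hX hn
  refine ⟨⌊x⌋₊ + 1, Nat.succ_pos _, ?_, ?_⟩
  · rw [← hxn]
    exact_mod_cast pow_lt_pow_left₀ (Nat.lt_floor_add_one x) hx hn
  have hM : ((⌊x⌋₊ + 1 : ℕ) : ℝ) + 1 ≤ x + 2 := by
    push_cast
    linarith [Nat.floor_le hx]
  refine (pow_le_pow_left₀ (by positivity) hM n).trans ?_
  rcases le_total x 1 with hx1 | hx1
  · calc (x + 2) ^ n ≤ 3 ^ n := pow_le_pow_left₀ (by positivity) (by linarith) n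
      _ ≤ 3 ^ n * (X + 1) := le_mul_of_one_le_right (by positivity) (by linarith)
  · calc (x + 2) ^ n ≤ (3 * x) ^ n := pow_le_pow_left₀ (by positivity) (by linarith) n
      _ ≤ 3 ^ n * (X + 1) := by rw [mul_pow, hxn]; linarith [pow_pos (three_pos (α := ℝ)) n]

def quadrant (z : ℂ) : Bool × Bool := (decide (0 ≤ z.re), decide (0 ≤ z.im))

theorem norm_sub_sq_le_norm_sq_sub_sq {z z' : ℂ} (h : quadrant z = quadrant z') :
    ‖z - z'‖ ^ 2 ≤ ‖z ^ 2 - z' ^ 2‖ := by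
  simp only [quadrant, Prod.mk.injEq, decide_eq_decide] at h
  have same_sign : ∀ {s t : ℝ}, (0 ≤ s ↔ 0 ≤ t) → 0 ≤ s * t := by
    intro s t hst
    rcases lt_or_ge s 0 with hs | hs
    · exact (mul_pos_of_neg_of_neg hs (not_le.mp (hst.not.mp hs.not_ge))).le
    · exact mul_nonneg hs (hst.mp hs)
  have hle : ‖z - z'‖ ≤ ‖z + z'‖ := by
    rw [← sq_le_sq₀ (norm_nonneg _) (norm_nonneg _), Complex.sq_norm, Complex.sq_norm,
      Complex.normSq_apply, Complex.normSq_apply, Complex.sub_re, Complex.sub_im,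
      Complex.add_re, Complex.add_im]
    nlinarith [same_sign h.1, same_sign h.2]
  calc ‖z - z'‖ ^ 2 ≤ ‖z + z'‖ * ‖z - z'‖ := by
        rw [sq]; exact mul_le_mul_of_nonneg_right hle (norm_nonneg _)
    _ = ‖z ^ 2 - z' ^ 2‖ := by rw [← norm_mul]; ring_nf

theorem norm_sub_le_sqrt_of_quadrant_eq {z z' y : ℂ} {m : ℕ} (hm : m ≠ 0) {c : ℝ}
    (h : quadrant z = quadrant z') (hz : ‖z ^ 2 - y‖ ^ m ≤ c) (hz' : ‖z' ^ 2 - y‖ ^ m ≤ c) :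
    ‖z - z'‖ ≤ √(2 * c ^ (m⁻¹ : ℝ)) := by
  have root : ∀ {u : ℂ}, ‖u‖ ^ m ≤ c → ‖u‖ ≤ c ^ (m⁻¹ : ℝ) := fun hu =>
    (Real.pow_rpow_inv_natCast (norm_nonneg _) hm).symm.trans_le
      (Real.rpow_le_rpow (by positivity) hu (by positivity))
  refine Real.le_sqrt_of_sq_le ((norm_sub_sq_le_norm_sq_sub_sq h).trans ?_)
  calc ‖z ^ 2 - z' ^ 2‖ ≤ ‖z ^ 2 - y‖ + ‖y - z' ^ 2‖ := norm_sub_le_norm_sub_add_norm_sub _ _ _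
    _ ≤ 2 * c ^ (m⁻¹ : ℝ) := by rw [norm_sub_rev y]; linarith [root hz, root hz']

/-- The index of the cell containing `t` when `[-ρ, ρ]` is cut into `M` intervals of length
`2ρ / M`. -/
def cellIndex (ρ : ℝ) (M : ℕ) (t : ℝ) : ℕ := ⌊(t + ρ) * M / (2 * ρ)⌋₊

theorem cellIndex_le {ρ t : ℝ} (hρ : 0 < ρ) (M : ℕ) (ht : t ≤ ρ) : cellIndex ρ M t ≤ M := by
  refine Nat.floor_le_of_le ?_
  rw [div_le_iff₀ (by positivity)]
  nlinarith [M.cast_nonneg (α := ℝ)]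

theorem abs_sub_le_of_cellIndex_eq {ρ t t' : ℝ} (hρ : 0 < ρ) {M : ℕ} (hM : 0 < M)
    (ht : -ρ ≤ t) (ht' : -ρ ≤ t') (h : cellIndex ρ M t = cellIndex ρ M t') :
    |t - t'| ≤ 2 * ρ / M := by
  have hM' : (0 : ℝ) < M := by exact_mod_cast hM
  have key : |(t + ρ) * M / (2 * ρ) - (t' + ρ) * M / (2 * ρ)| < 1 := by
    have h₁ := Nat.floor_le (a := (t + ρ) * M / (2 * ρ))
      (div_nonneg (mul_nonneg (by linarith) hM'.le) (by linarith))
    have h₂ := Nat.floor_le (a := (t' + ρ) * M / (2 * ρ))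
      (div_nonneg (mul_nonneg (by linarith) hM'.le) (by linarith))
    have h₃ := Nat.lt_floor_add_one ((t + ρ) * M / (2 * ρ))
    have h₄ := Nat.lt_floor_add_one ((t' + ρ) * M / (2 * ρ))
    unfold cellIndex at h
    rw [h] at h₁ h₃
    exact abs_sub_lt_iff.mpr ⟨by linarith, by linarith⟩
  rw [← sub_div, ← sub_mul, add_sub_add_right_eq_sub, abs_div, abs_mul, abs_of_pos hM',
    abs_of_pos (by positivity : 0 < 2 * ρ), div_lt_one (by positivity)] at key
  rw [le_div_iff₀ hM']
  exact key.le

theorem norm_sub_le_of_cellIndex_eq {ρ : ℝ} (hρ : 0 < ρ) {M : ℕ} (hM : 0 < M) {u u' : ℂ}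
    (hu : ‖u‖ ≤ ρ) (hu' : ‖u'‖ ≤ ρ) (hre : cellIndex ρ M u.re = cellIndex ρ M u'.re)
    (him : cellIndex ρ M u.im = cellIndex ρ M u'.im) : ‖u - u'‖ ≤ 4 * ρ / M := by
  have lower : ∀ {t : ℝ}, |t| ≤ ρ → -ρ ≤ t := fun h => (abs_le.mp h).1
  have hre' := abs_sub_le_of_cellIndex_eq hρ hM (lower ((Complex.abs_re_le_norm u).trans hu))
    (lower ((Complex.abs_re_le_norm u').trans hu')) hre
  have him' := abs_sub_le_of_cellIndex_eq hρ hM (lower ((Complex.abs_im_le_norm u).trans hu))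
    (lower ((Complex.abs_im_le_norm u').trans hu')) him
  calc ‖u - u'‖ ≤ |(u - u').re| + |(u - u').im| := Complex.norm_le_abs_re_add_abs_im _
    _ ≤ 2 * ρ / M + 2 * ρ / M := by
      rw [Complex.sub_re, Complex.sub_im]; exact add_le_add hre' him'
    _ = 4 * ρ / M := by ring

theorem absNorm_le_absNorm_of_le {R L : Type*} [CommRing R] [IsDedekindDomain R]
    [Module.Free ℤ R] [Module.Finite ℤ R] [Field L] [Algebra R L] [IsFractionRing R L]
    {I J : FractionalIdeal R⁰ L} (hI : I ≠ 0) (hIJ : I ≤ J) :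
    FractionalIdeal.absNorm J ≤ FractionalIdeal.absNorm I := by
  have hJ : J ≠ 0 := by rintro rfl; exact hI (le_bot_iff.mp hIJ)
  obtain ⟨I₀, hI₀⟩ := FractionalIdeal.le_one_iff_exists_coeIdeal.mp
    ((mul_le_mul_right hIJ J⁻¹).trans (inv_mul_cancel₀ hJ).le)
  have hfac : I = J * I₀ := by rw [hI₀, ← mul_assoc, mul_inv_cancel₀ hJ, one_mul]
  have hI₀ : I₀ ≠ ⊥ := by rintro rfl; simp [hI] at hfac
  rw [hfac, map_mul, FractionalIdeal.coeIdeal_absNorm]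
  refine le_mul_of_one_le_right (FractionalIdeal.absNorm_nonneg J) ?_
  exact_mod_cast Nat.one_le_iff_ne_zero.mpr (Ideal.absNorm_eq_zero_iff.not.mpr hI₀)

theorem absNorm_le_prod_of_mem {𝔞 : FractionalIdeal (𝓞 K)⁰ K} {x : K} (hx : x ∈ 𝔞)
    (hx0 : x ≠ 0) :
    (FractionalIdeal.absNorm 𝔞 : ℝ) ≤ ∏ w : InfinitePlace K, w x ^ w.mult := by
  rw [InfinitePlace.prod_eq_abs_norm, ← FractionalIdeal.absNorm_span_singleton (𝓞 K)]
  exact_mod_cast absNorm_le_absNorm_of_le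
    (FractionalIdeal.spanSingleton_eq_zero_iff.not.mpr hx0)
    (FractionalIdeal.spanSingleton_le_iff_mem.mpr hx)

theorem eq_of_sub_mem_of_prod_lt_absNorm {𝔞 : FractionalIdeal (𝓞 K)⁰ K} {a a' : K}
    (h : a - a' ∈ 𝔞) {ε : InfinitePlace K → ℝ}
    (hε : ∀ w, ‖w.embedding a - w.embedding a'‖ ≤ ε w)
    (hprod : ∏ w, ε w ^ w.mult < FractionalIdeal.absNorm 𝔞) : a = a' := by
  by_contra hne
  refine (absNorm_le_prod_of_mem h (sub_ne_zero.mpr hne)).not_gt (hprod.trans_le' ?_)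
  refine Finset.prod_le_prod (fun w _ => by positivity) fun w _ =>
    pow_le_pow_left₀ (by positivity) ?_ _
  rw [← InfinitePlace.norm_embedding_eq, map_sub]
  exact hε w

open Classical in
theorem card_piFinset_range_prod_ite (M : ℕ) (z : InfinitePlace K → ℕ) :
    (Fintype.piFinset fun w : InfinitePlace K =>
      Finset.range (M + 1) ×ˢ (if w.IsReal then {z w} else Finset.range (M + 1))).card =
      (M + 1) ^ Module.finrank ℚ K := by
  rw [Fintype.card_piFinset, ← InfinitePlace.sum_mult_eq, ← Finset.prod_pow_eq_pow_sum]
  refine Finset.prod_congr rfl fun w _ => ?_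
  rw [Finset.card_product, apply_ite Finset.card, InfinitePlace.mult]
  split_ifs <;> simp [sq]

theorem finite_and_ncard_le_of_pow_lt_absNorm {𝔞 : FractionalIdeal (𝓞 K)⁰ K} {T : Set K}
    (hT𝔞 : ∀ a ∈ T, ∀ a' ∈ T, a - a' ∈ 𝔞) {ρ : InfinitePlace K → ℝ} (hρ : ∀ w, 0 < ρ w)
    (hTρ : ∀ a ∈ T, ∀ a' ∈ T, ∀ w, ‖w.embedding a - w.embedding a'‖ ≤ ρ w)
    {M : ℕ} (hM : 0 < M)
    (hMρ : (4 / M : ℝ) ^ Module.finrank ℚ K * ∏ w, ρ w ^ w.mult < FractionalIdeal.absNorm 𝔞) :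
    T.Finite ∧ T.ncard ≤ (M + 1) ^ Module.finrank ℚ K := by
  classical
  rcases T.eq_empty_or_nonempty with rfl | ⟨a₀, ha₀⟩
  · simp
  let cell : K → InfinitePlace K → ℕ × ℕ := fun a w =>
    (cellIndex (ρ w) M (w.embedding a - w.embedding a₀).re,
      cellIndex (ρ w) M (w.embedding a - w.embedding a₀).im)
  let cells : Finset (InfinitePlace K → ℕ × ℕ) := Fintype.piFinset fun w =>
    Finset.range (M + 1) ×ˢ (if w.IsReal then {cellIndex (ρ w) M 0} else Finset.range (M + 1))
  have hmaps : Set.MapsTo cell T cells := by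
    intro a ha
    simp only [cells, Finset.mem_coe, Fintype.mem_piFinset, Finset.mem_product, Finset.mem_range]
    intro w
    have hnorm := hTρ a ha a₀ ha₀ w
    refine ⟨Nat.lt_succ_of_le (cellIndex_le (hρ w) M ((Complex.re_le_norm _).trans hnorm)), ?_⟩
    split_ifs with hw
    · simp only [cell, Finset.mem_singleton, ← InfinitePlace.embedding_of_isReal_apply hw,
        Complex.sub_im, Complex.ofReal_im, sub_zero]
    · exact Finset.mem_range.mpr
        (Nat.lt_succ_of_le (cellIndex_le (hρ w) M ((Complex.im_le_norm _).trans hnorm)))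
  have hinj : Set.InjOn cell T := by
    intro a ha a' ha' h
    refine eq_of_sub_mem_of_prod_lt_absNorm (hT𝔞 a ha a' ha') (ε := fun w => 4 / M * ρ w)
      (fun w => ?_) ?_
    · have := norm_sub_le_of_cellIndex_eq (hρ w) hM (hTρ a ha a₀ ha₀ w) (hTρ a' ha' a₀ ha₀ w)
        (congrArg Prod.fst (congrFun h w)) (congrArg Prod.snd (congrFun h w))
      rwa [sub_sub_sub_cancel_right, mul_div_right_comm] at this
    · rwa [Finset.prod_congr rfl fun w _ => mul_pow _ _ _, Finset.prod_mul_distrib,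
        Finset.prod_pow_eq_pow_sum, InfinitePlace.sum_mult_eq]
  refine ⟨Set.Finite.of_injOn hmaps hinj cells.finite_toSet, ?_⟩
  calc T.ncard ≤ (cells : Set _).ncard :=
        Set.ncard_le_ncard_of_injOn cell (fun _ ha => hmaps ha) hinj
    _ = _ := by rw [Set.ncard_coe_finset, card_piFinset_range_prod_ite]

theorem finite_and_ncard_le_of_forall_norm_sub_le {𝔞 : FractionalIdeal (𝓞 K)⁰ K} (h𝔞 : 𝔞 ≠ 0)
    {T : Set K} (hT𝔞 : ∀ a ∈ T, ∀ a' ∈ T, a - a' ∈ 𝔞) {ρ : InfinitePlace K → ℝ}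
    (hρ : ∀ w, 0 < ρ w)
    (hTρ : ∀ a ∈ T, ∀ a' ∈ T, ∀ w, ‖w.embedding a - w.embedding a'‖ ≤ ρ w) :
    T.Finite ∧ (T.ncard : ℝ) ≤ 3 ^ Module.finrank ℚ K *
      (4 ^ Module.finrank ℚ K * (∏ w, ρ w ^ w.mult) / FractionalIdeal.absNorm 𝔞 + 1) := by
  set n := Module.finrank ℚ K
  have hN : (0 : ℝ) < FractionalIdeal.absNorm 𝔞 := by
    exact_mod_cast (FractionalIdeal.absNorm_nonneg 𝔞).lt_of_ne'
      (FractionalIdeal.absNorm_eq_zero_iff.not.mpr h𝔞)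
  have hV : 0 < ∏ w, ρ w ^ w.mult := Finset.prod_pos fun w _ => pow_pos (hρ w) _
  obtain ⟨M, hM, hlt, hle⟩ := exists_lt_pow_and_add_one_pow_le
    (Module.finrank_pos (R := ℚ) (M := K)).ne'
    (X := 4 ^ n * (∏ w, ρ w ^ w.mult) / FractionalIdeal.absNorm 𝔞) (by positivity)
  have hMρ : (4 / M : ℝ) ^ n * ∏ w, ρ w ^ w.mult < FractionalIdeal.absNorm 𝔞 := by
    rw [div_lt_iff₀ hN] at hlt
    rw [div_pow, div_mul_eq_mul_div, div_lt_iff₀ (by positivity)]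
    linarith
  obtain ⟨hfin, hcard⟩ := finite_and_ncard_le_of_pow_lt_absNorm hT𝔞 hρ hTρ hM hMρ
  exact ⟨hfin, le_trans (by exact_mod_cast hcard) hle⟩

theorem prod_sqrt_two_mul_rpow_inv_mult_pow {c : InfinitePlace K → ℝ} (hc : ∀ w, 0 ≤ c w) :
    ∏ w, √(2 * c w ^ ((w.mult : ℝ)⁻¹)) ^ w.mult =
      √(2 ^ Module.finrank ℚ K) * (∏ w, c w) ^ ((1 : ℝ) / 2) := by
  rw [← Real.sqrt_eq_rpow, ← Real.sqrt_mul (by positivity), eq_comm,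
    Real.sqrt_eq_iff_eq_sq (mul_nonneg (by positivity) (Finset.prod_nonneg fun w _ => hc w))
      (by positivity), ← Finset.prod_pow, ← InfinitePlace.sum_mult_eq,
    ← Finset.prod_pow_eq_pow_sum, ← Finset.prod_mul_distrib]
  refine Finset.prod_congr rfl fun w _ => ?_
  rw [← pow_mul, pow_mul', Real.sq_sqrt (mul_nonneg zero_le_two (Real.rpow_nonneg (hc w) _)),
    mul_pow, Real.rpow_inv_natCast_pow (hc w) InfinitePlace.mult_ne_zero, mul_comm]

theorem finite_and_ncard_le_of_quadrant_eq {𝔞 : FractionalIdeal (𝓞 K)⁰ K} (h𝔞 : 𝔞 ≠ 0)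
    {y : InfinitePlace K → ℂ} {c : InfinitePlace K → ℝ} (hc : ∀ w, 0 < c w) {T : Set K}
    (hT𝔞 : ∀ a ∈ T, ∀ a' ∈ T, a - a' ∈ 𝔞)
    (hTc : ∀ a ∈ T, ∀ w : InfinitePlace K, ‖(w.embedding a) ^ 2 - y w‖ ^ w.mult ≤ c w)
    (hTq : ∀ a ∈ T, ∀ a' ∈ T, ∀ w : InfinitePlace K,
      quadrant (w.embedding a) = quadrant (w.embedding a')) :
    T.Finite ∧ (T.ncard : ℝ) ≤ 3 ^ Module.finrank ℚ K *
      (4 ^ Module.finrank ℚ K * √(2 ^ Module.finrank ℚ K) *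
        ((∏ w, c w) ^ ((1 : ℝ) / 2) / FractionalIdeal.absNorm 𝔞) + 1) := by
  have hρ : ∀ w, 0 < √(2 * c w ^ ((w.mult : ℝ)⁻¹)) := fun w =>
    Real.sqrt_pos.mpr (mul_pos two_pos (Real.rpow_pos_of_pos (hc w) _))
  have := finite_and_ncard_le_of_forall_norm_sub_le h𝔞 hT𝔞 hρ fun a ha a' ha' w =>
    norm_sub_le_sqrt_of_quadrant_eq InfinitePlace.mult_ne_zero (hTq a ha a' ha' w)
      (hTc a ha w) (hTc a' ha' w)
  rwa [prod_sqrt_two_mul_rpow_inv_mult_pow fun w => (hc w).le, ← mul_assoc, mul_div_assoc] at this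

/-- Counting points of a shifted fractional ideal in a region defined by
quadratic archimedean conditions. -/
theorem quadratic_condition_count :
    ∃ C : ℝ, 0 < C ∧
      ∀ (𝔞 : FractionalIdeal (nonZeroDivisors (𝓞 K)) K), 𝔞 ≠ 0 →
      ∀ (b : K) (y : InfinitePlace K → ℂ) (c : InfinitePlace K → ℝ),
      (∀ w : InfinitePlace K, w.IsReal → (y w).im = 0) →
      (∀ w : InfinitePlace K, 0 < c w) →
      {a' : K | a' - b ∈ 𝔞 ∧
          ∀ w : InfinitePlace K,
            ‖(w.embedding a') ^ 2 - y w‖ ^ w.mult ≤ c w}.Finite ∧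
      (Nat.card {a' : K | a' - b ∈ 𝔞 ∧
          ∀ w : InfinitePlace K,
            ‖(w.embedding a') ^ 2 - y w‖ ^ w.mult ≤ c w} : ℝ) ≤
        C * ((∏ w : InfinitePlace K, c w) ^ ((1 : ℝ) / 2) /
          (FractionalIdeal.absNorm 𝔞 : ℝ) + 1) := by
  classical
  set n := Module.finrank ℚ K
  set A : ℝ := 4 ^ n * √(2 ^ n)
  refine ⟨Fintype.card (InfinitePlace K → Bool × Bool) * 3 ^ n * (A + 1), by positivity, ?_⟩
  intro 𝔞 h𝔞 b y c _ hc
  set S := {a' : K | a' - b ∈ 𝔞 ∧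
    ∀ w : InfinitePlace K, ‖(w.embedding a') ^ 2 - y w‖ ^ w.mult ≤ c w}
  set r := (∏ w, c w) ^ ((1 : ℝ) / 2) / (FractionalIdeal.absNorm 𝔞 : ℝ)
  let quadrants : K → InfinitePlace K → Bool × Bool := fun a w => quadrant (w.embedding a)
  have hfiber : ∀ q, {a ∈ S | quadrants a = q}.Finite ∧
      ({a ∈ S | quadrants a = q}.ncard : ℝ) ≤ 3 ^ n * (A * r + 1) := by
    intro q
    refine finite_and_ncard_le_of_quadrant_eq h𝔞 hc ?_ (fun a ha => ha.1.2) ?_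
    · rintro a ⟨ha, -⟩ a' ⟨ha', -⟩
      simpa using (𝔞 : Submodule (𝓞 K) K).sub_mem ha.1 ha'.1
    · rintro a ⟨-, rfl⟩ a' ⟨-, hq⟩ w
      exact (congrFun hq w).symm
  obtain ⟨hfin, hcard⟩ := finite_and_ncard_le_of_forall_fiber S quadrants hfiber
  refine ⟨hfin, ?_⟩
  have hr : 0 ≤ r := div_nonneg (Real.rpow_nonneg (Finset.prod_nonneg fun w _ => (hc w).le) _)
    (by exact_mod_cast FractionalIdeal.absNorm_nonneg 𝔞)
  have hA : 0 ≤ A := by positivity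
  calc (Nat.card S : ℝ)
      ≤ Fintype.card (InfinitePlace K → Bool × Bool) * (3 ^ n * (A * r + 1)) := by
        rwa [Nat.card_coe_set_eq]
    _ ≤ Fintype.card (InfinitePlace K → Bool × Bool) * (3 ^ n * ((A + 1) * (r + 1))) := by
        gcongr
        nlinarith
    _ = _ := by ring

end ManinSplitTorsor
end
end

section
/- Let v be a real place of K and let α = σ_v(a) ∈ ℝ be the image of a under the corresponding embedding. Then ∫_{ℝ²} dx₁ dx₃ / (|x₃| · max{|α x₃² − x₁²|, |x₁|, |x₃|^{-1}, |x₃|, 1}) = (3/2) · vol{(y₅,y₆,y₇) ∈ ℝ³ : max{|y₆(α y₆² − y₇²)|, |y₅y₆y₇|, |y₅³|, |y₅y₆²|, |y₅²y₆|} ≤ 1}, where both sides are finite; the integral is with respect to Lebesgue measure on ℝ², ignoring the null set {x₃ = 0}, and vol denotes Lebesgue measure on ℝ³. -/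
/-!
Both sides reduce to `I = ∫∫ |v| / R(v, w) dv dw`, where `R = reducedHeight α`. On the left,
substituting `x₁ = x₃ w` (Jacobian `|x₃|`) turns `|x₃| · max {…}` into `R(x₃, w)`. On the right,
the substitution `(y₅, y₆, y₇) = (u, u v, u v w)` has Jacobian `u² |v|` and turns the height into
`|u|³ R(v, w)`; integrating `u²` over `|u|³ R ≤ 1` gives `2 / (3 R)`, so the volume is `(2/3) I`.

`I` is finite because `|α - w²| ≥ (|w| - √α)²` gives `3 R ≥ 1 + v² + |v|³ (|w| - √α)²`: the
`w`-integral is then bounded by two Cauchy integrals centred at `±√α`, which yields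
`6π / √(|v| (1 + v²))`, integrable like `|v|^(-1/2)` at `0` and `|v|^(-3/2)` at infinity.
-/

open NumberField

noncomputable section

namespace ManinSplitTorsor

variable {K : Type*} [Field K] [NumberField K]

section RealPlaceDensity

open MeasureTheory Set
open scoped ENNReal Real

lemma lintegral_eq_abs_mul_lintegral_comp_mul (f : ℝ → ℝ≥0∞) {c : ℝ} (hc : c ≠ 0) :
    ∫⁻ x, f x = ENNReal.ofReal |c| * ∫⁻ x, f (c * x) := by
  conv_lhs => rw [← Real.smul_map_volume_mul_left hc]
  rw [lintegral_smul_measure, smul_eq_mul]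
  exact congrArg _ ((Homeomorph.mulLeft₀ c hc).measurableEmbedding.lintegral_map f)

lemma lintegral_prod_eq_lintegral_comp_mul_mul {f : ℝ × ℝ → ℝ≥0∞} (hf : Measurable f) {u : ℝ}
    (hu : u ≠ 0) :
    ∫⁻ p, f p = ∫⁻ p : ℝ × ℝ, ENNReal.ofReal (u ^ 2 * |p.1|) * f (u * p.1, u * p.1 * p.2) := by
  have hg : Measurable fun p : ℝ × ℝ =>
      ENNReal.ofReal (u ^ 2 * |p.1|) * f (u * p.1, u * p.1 * p.2) := by fun_prop
  rw [Measure.volume_eq_prod, lintegral_prod _ hf.aemeasurable, lintegral_prod _ hg.aemeasurable]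
  have fiber (b : ℝ) (hb : b ≠ 0) :
      ∫⁻ c, f (b, c) = ENNReal.ofReal |b| * ∫⁻ w, f (b, b * w) :=
    lintegral_eq_abs_mul_lintegral_comp_mul _ hb
  calc ∫⁻ b, ∫⁻ c, f (b, c)
      = ∫⁻ b, ENNReal.ofReal |b| * ∫⁻ w, f (b, b * w) :=
        lintegral_congr_ae ((Measure.ae_ne _ 0).mono fiber)
    _ = ENNReal.ofReal |u| * ∫⁻ v, ENNReal.ofReal |u * v| * ∫⁻ w, f (u * v, u * v * w) :=
        lintegral_eq_abs_mul_lintegral_comp_mul _ hu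
    _ = ∫⁻ v, ∫⁻ w, ENNReal.ofReal (u ^ 2 * |v|) * f (u * v, u * v * w) := by
        rw [← lintegral_const_mul' _ _ ENNReal.ofReal_ne_top]
        refine lintegral_congr fun v => ?_
        rw [← mul_assoc, ← ENNReal.ofReal_mul (abs_nonneg u),
          ← lintegral_const_mul' _ _ ENNReal.ofReal_ne_top, abs_mul, ← mul_assoc, ← sq, sq_abs]

-- For `α ≤ 0`, `√α = 0` and the bound reads `w² ≤ w² - α`.
lemma abs_sub_sqrt_sq_le (α w : ℝ) : (|w| - √α) ^ 2 ≤ |α - w ^ 2| := by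
  rcases le_or_gt α 0 with hα | hα
  · rw [Real.sqrt_eq_zero'.2 hα, sub_zero, sq_abs, abs_sub_comm,
      abs_of_nonneg (by nlinarith [sq_nonneg w])]
    linarith
  · have hfactor : |α - w ^ 2| = |(√α - |w|)| * (√α + |w|) := by
      rw [← abs_of_nonneg (by positivity : 0 ≤ √α + |w|), ← abs_mul]
      congr 1
      rw [← sq_abs w]; nlinarith [Real.sq_sqrt hα.le]
    have hle : |(√α - |w|)| ≤ √α + |w| :=
      abs_sub_le_iff.2 ⟨by linarith [abs_nonneg w], by linarith [Real.sqrt_nonneg α]⟩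
    rw [hfactor, ← sq_abs, abs_sub_comm, sq]
    exact mul_le_mul_of_nonneg_left hle (abs_nonneg _)

lemma inv_add_mul_sub_sq_eq {A B : ℝ} (hA : 0 < A) (hB : 0 ≤ B) (c s : ℝ) :
    (A + B * (s - c) ^ 2)⁻¹ = A⁻¹ * (1 + (√B / √A * (s - c)) ^ 2)⁻¹ := by
  rw [← mul_inv, mul_pow, div_pow, Real.sq_sqrt hB, Real.sq_sqrt hA.le]
  field_simp

lemma integrable_inv_add_mul_sub_sq {A B : ℝ} (hA : 0 < A) (hB : 0 < B) (c : ℝ) :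
    Integrable fun s : ℝ => (A + B * (s - c) ^ 2)⁻¹ := by
  simp_rw [inv_add_mul_sub_sq_eq hA hB.le c]
  have hk : √B / √A ≠ 0 := by positivity
  exact ((integrable_inv_one_add_sq.comp_mul_left' hk).comp_sub_right c).const_mul _

lemma integral_inv_add_mul_sub_sq {A B : ℝ} (hA : 0 < A) (hB : 0 < B) (c : ℝ) :
    ∫ s, (A + B * (s - c) ^ 2)⁻¹ = π / √(A * B) := by
  simp_rw [inv_add_mul_sub_sq_eq hA hB.le c]
  rw [integral_const_mul, integral_sub_right_eq_self (fun s => (1 + (√B / √A * s) ^ 2)⁻¹),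
    Measure.integral_comp_mul_left (fun s => (1 + s ^ 2)⁻¹), integral_univ_inv_one_add_sq,
    Real.sqrt_mul hA.le, smul_eq_mul, abs_of_pos (by positivity)]
  field_simp
  exact Real.sq_sqrt hA.le

def torsorHeight (α : ℝ) (y : ℝ × ℝ × ℝ) : ℝ :=
  max (max (max (max (|y.2.1 * (α * y.2.1 ^ 2 - y.2.2 ^ 2)|)
    (|y.1 * y.2.1 * y.2.2|)) (|y.1 ^ 3|)) (|y.1 * y.2.1 ^ 2|)) (|y.1 ^ 2 * y.2.1|)

def densityIntegrand (α : ℝ) (x : ℝ × ℝ) : ℝ :=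
  1 / (|x.2| * max (max (max (max (|α * x.2 ^ 2 - x.1 ^ 2|) (|x.1|)) (|x.2|⁻¹)) (|x.2|)) 1)

def reducedHeight (α v w : ℝ) : ℝ :=
  max (max (max (max (|v| ^ 3 * |α - w ^ 2|) (v ^ 2 * |w|)) 1) (v ^ 2)) |v|

lemma measurable_torsorHeight (α : ℝ) : Measurable (torsorHeight α) := by
  unfold torsorHeight; fun_prop

lemma measurable_densityIntegrand (α : ℝ) : Measurable (densityIntegrand α) := by
  unfold densityIntegrand; fun_prop

lemma measurable_reducedHeight (α : ℝ) : Measurable fun p : ℝ × ℝ => reducedHeight α p.1 p.2 := by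
  unfold reducedHeight; fun_prop

lemma torsorHeight_mul (α u v w : ℝ) :
    torsorHeight α (u, u * v, u * v * w) = |u| ^ 3 * reducedHeight α v w := by
  have e1 : |u * v * (α * (u * v) ^ 2 - (u * v * w) ^ 2)| = |u| ^ 3 * (|v| ^ 3 * |α - w ^ 2|) := by
    rw [show u * v * (α * (u * v) ^ 2 - (u * v * w) ^ 2) = (u * v) ^ 3 * (α - w ^ 2) by ring]
    simp only [abs_mul, abs_pow]; ring
  have e2 : |u * (u * v) * (u * v * w)| = |u| ^ 3 * (v ^ 2 * |w|) := by
    rw [← sq_abs v]; simp only [abs_mul]; ring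
  have e3 : |u ^ 3| = |u| ^ 3 * 1 := by rw [abs_pow, mul_one]
  have e4 : |u * (u * v) ^ 2| = |u| ^ 3 * v ^ 2 := by
    rw [← sq_abs v]; simp only [abs_mul, abs_pow]; ring
  have e5 : |u ^ 2 * (u * v)| = |u| ^ 3 * |v| := by
    simp only [abs_mul, abs_pow]; ring
  simp only [torsorHeight, reducedHeight, mul_max_of_nonneg _ _ (pow_nonneg (abs_nonneg u) 3),
    e1, e2, e3, e4, e5]

lemma abs_mul_densityIntegrand (α v w : ℝ) :
    |v| * densityIntegrand α (v * w, v) = |v| / reducedHeight α v w := by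
  rcases eq_or_ne v 0 with rfl | hv
  · simp
  have e1 : |v| * |α * v ^ 2 - (v * w) ^ 2| = |v| ^ 3 * |α - w ^ 2| := by
    rw [show α * v ^ 2 - (v * w) ^ 2 = v ^ 2 * (α - w ^ 2) by ring, ← sq_abs v]
    simp only [abs_mul, abs_pow, abs_abs]; ring
  have e2 : |v| * |v * w| = v ^ 2 * |w| := by
    rw [abs_mul, ← mul_assoc, ← sq, sq_abs]
  have e3 : |v| * |v|⁻¹ = 1 := mul_inv_cancel₀ (abs_ne_zero.2 hv)
  have e4 : |v| * |v| = v ^ 2 := by rw [← sq, sq_abs]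
  have hR : |v| * max (max (max (max (|α * v ^ 2 - (v * w) ^ 2|) (|v * w|)) (|v|⁻¹)) (|v|)) 1
      = reducedHeight α v w := by
    simp only [reducedHeight, mul_max_of_nonneg _ _ (abs_nonneg v), e1, e2, e3, e4, mul_one]
  rw [densityIntegrand, hR, mul_one_div]

lemma one_le_reducedHeight (α v w : ℝ) : 1 ≤ reducedHeight α v w :=
  le_max_of_le_left <| le_max_of_le_left <| le_max_right _ _

lemma one_add_sq_add_le_three_mul_reducedHeight (α v w : ℝ) :
    1 + v ^ 2 + |v| ^ 3 * (|w| - √α) ^ 2 ≤ 3 * reducedHeight α v w := by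
  have h1 := one_le_reducedHeight α v w
  have h2 : v ^ 2 ≤ reducedHeight α v w := le_max_of_le_left <| le_max_right _ _
  have h3 : |v| ^ 3 * |α - w ^ 2| ≤ reducedHeight α v w :=
    le_max_of_le_left <| le_max_of_le_left <| le_max_of_le_left <| le_max_left _ _
  have h4 := mul_le_mul_of_nonneg_left (abs_sub_sqrt_sq_le α w) (pow_nonneg (abs_nonneg v) 3)
  linarith

lemma abs_div_reducedHeight_le (α v w : ℝ) :
    |v| / reducedHeight α v w ≤ 3 * |v| *
      ((1 + v ^ 2 + |v| ^ 3 * (w - √α) ^ 2)⁻¹ + (1 + v ^ 2 + |v| ^ 3 * (w - -√α) ^ 2)⁻¹) := by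
  calc |v| / reducedHeight α v w
      ≤ |v| / ((1 + v ^ 2 + |v| ^ 3 * (|w| - √α) ^ 2) / 3) := by
        gcongr; linarith [one_add_sq_add_le_three_mul_reducedHeight α v w]
    _ = 3 * |v| * (1 + v ^ 2 + |v| ^ 3 * (|w| - √α) ^ 2)⁻¹ := by field_simp
    _ ≤ _ := by
        gcongr
        rcases abs_choice w with h | h <;> rw [h]
        · exact le_add_of_nonneg_right (by positivity)
        · rw [show (-w - √α) ^ 2 = (w - -√α) ^ 2 by ring]
          exact le_add_of_nonneg_left (by positivity)

lemma lintegral_abs_div_reducedHeight_le (α : ℝ) {v : ℝ} (hv : v ≠ 0) :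
    ∫⁻ w, ENNReal.ofReal (|v| / reducedHeight α v w)
      ≤ ENNReal.ofReal (6 * π / √(|v| * (1 + v ^ 2))) := by
  have hA : 0 < 1 + v ^ 2 := by positivity
  have hB : 0 < |v| ^ 3 := by positivity
  set F : ℝ → ℝ := fun w => 3 * |v| *
    ((1 + v ^ 2 + |v| ^ 3 * (w - √α) ^ 2)⁻¹ + (1 + v ^ 2 + |v| ^ 3 * (w - -√α) ^ 2)⁻¹)
  have hF : Integrable F := ((integrable_inv_add_mul_sub_sq hA hB _).add
    (integrable_inv_add_mul_sub_sq hA hB _)).const_mul _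
  have hsqrt : √((1 + v ^ 2) * |v| ^ 3) = |v| * √(|v| * (1 + v ^ 2)) := by
    rw [show (1 + v ^ 2) * |v| ^ 3 = |v| ^ 2 * (|v| * (1 + v ^ 2)) by ring,
      Real.sqrt_mul (by positivity), Real.sqrt_sq (abs_nonneg v)]
  calc ∫⁻ w, ENNReal.ofReal (|v| / reducedHeight α v w)
      ≤ ∫⁻ w, ENNReal.ofReal (F w) :=
        lintegral_mono fun w => ENNReal.ofReal_le_ofReal (abs_div_reducedHeight_le α v w)
    _ = ENNReal.ofReal (∫ w, F w) :=
        (ofReal_integral_eq_lintegral_ofReal hF (ae_of_all _ fun w => by positivity)).symm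
    _ = ENNReal.ofReal (6 * π / √(|v| * (1 + v ^ 2))) := by
        rw [integral_const_mul, integral_add (integrable_inv_add_mul_sub_sq hA hB _)
          (integrable_inv_add_mul_sub_sq hA hB _), integral_inv_add_mul_sub_sq hA hB,
          integral_inv_add_mul_sub_sq hA hB, hsqrt]
        congr 1
        field_simp
        ring

lemma integrable_inv_sqrt_abs_mul_one_add_sq :
    Integrable fun v : ℝ => (√(|v| * (1 + v ^ 2)))⁻¹ := by
  have h := integrable_fun_norm_addHaar (volume : Measure ℝ) (f := fun t => (√(t * (1 + t ^ 2)))⁻¹)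
  simp only [Module.finrank_self, tsub_self, pow_zero, one_smul, Real.norm_eq_abs, sq_abs] at h
  refine h.2 ?_
  have hmeas : Measurable fun t : ℝ => (√(t * (1 + t ^ 2)))⁻¹ := by fun_prop
  have hsmall : ∀ t, 0 < t → (√(t * (1 + t ^ 2)))⁻¹ ≤ t ^ (-(1 / 2) : ℝ) := by
    intro t ht
    rw [Real.rpow_neg ht.le, ← Real.sqrt_eq_rpow]
    gcongr
    nlinarith [sq_nonneg t]
  have hlarge : ∀ t, 0 < t → (√(t * (1 + t ^ 2)))⁻¹ ≤ t ^ (-(3 / 2) : ℝ) := by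
    intro t ht
    rw [Real.rpow_neg ht.le, show (3 / 2 : ℝ) = 1 + 1 / 2 by norm_num, Real.rpow_add ht,
      Real.rpow_one, ← Real.sqrt_eq_rpow]
    gcongr
    rw [Real.le_sqrt (by positivity) (by positivity), mul_pow, Real.sq_sqrt ht.le]
    nlinarith [sq_nonneg t]
  rw [← Ioc_union_Ioi_eq_Ioi zero_le_one]
  refine IntegrableOn.union ?_ ?_
  · refine Integrable.mono'
      (intervalIntegral.intervalIntegrable_rpow' (r := -(1 / 2)) (a := 0) (b := 1) (by norm_num)).1
      hmeas.aestronglyMeasurable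
      ((ae_restrict_iff' measurableSet_Ioc).2 (ae_of_all _ fun t ht => ?_))
    rw [Real.norm_of_nonneg (by positivity)]
    exact hsmall t ht.1
  · refine Integrable.mono' (integrableOn_Ioi_rpow_of_lt (a := -(3 / 2)) (by norm_num) zero_lt_one)
      hmeas.aestronglyMeasurable
      ((ae_restrict_iff' measurableSet_Ioi).2 (ae_of_all _ fun t ht => ?_))
    rw [Real.norm_of_nonneg (by positivity)]
    exact hlarge t (zero_lt_one.trans ht)

lemma lintegral_abs_div_reducedHeight_ne_top (α : ℝ) :
    ∫⁻ p : ℝ × ℝ, ENNReal.ofReal (|p.1| / reducedHeight α p.1 p.2) ≠ ⊤ := by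
  have hmeas : Measurable fun p : ℝ × ℝ => ENNReal.ofReal (|p.1| / reducedHeight α p.1 p.2) :=
    (measurable_fst.abs.div (measurable_reducedHeight α)).ennreal_ofReal
  rw [Measure.volume_eq_prod, lintegral_prod _ hmeas.aemeasurable]
  refine ne_top_of_le_ne_top
    (integrable_inv_sqrt_abs_mul_one_add_sq.const_mul (6 * π)).lintegral_lt_top.ne ?_
  refine lintegral_mono_ae ((Measure.ae_ne _ 0).mono fun v hv => ?_)
  simpa only [div_eq_mul_inv] using lintegral_abs_div_reducedHeight_le α hv

lemma setLIntegral_sq_abs_pow_three_mul_le_one {m : ℝ} (hm : 0 < m) :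
    ∫⁻ u in {u : ℝ | |u| ^ 3 * m ≤ 1}, ENNReal.ofReal (u ^ 2) = ENNReal.ofReal (2 / (3 * m)) := by
  set r : ℝ := m⁻¹ ^ (1 / 3 : ℝ)
  have hr : 0 ≤ r := by positivity
  have hr3 : r ^ 3 = 1 / m := by
    rw [← Real.rpow_natCast, ← Real.rpow_mul (by positivity)]; norm_num
  have hset : {u : ℝ | |u| ^ 3 * m ≤ 1} = Icc (-r) r := by
    ext u
    rw [mem_ofPred_eq, mem_Icc, ← abs_le, ← pow_le_pow_iff_left₀ (abs_nonneg u) hr three_ne_zero,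
      hr3, le_div_iff₀ hm]
  rw [hset, ← ofReal_integral_eq_lintegral_ofReal (continuous_pow 2).integrableOn_Icc
    (ae_of_all _ fun u => sq_nonneg u), integral_Icc_eq_integral_Ioc,
    ← intervalIntegral.integral_of_le (by linarith), integral_pow, Odd.neg_pow (by decide), hr3]
  congr 1
  field_simp
  ring

lemma lintegral_densityIntegrand (α : ℝ) :
    ∫⁻ x, ENNReal.ofReal (densityIntegrand α x)
      = ∫⁻ p : ℝ × ℝ, ENNReal.ofReal (|p.1| / reducedHeight α p.1 p.2) := by
  have hf : Measurable fun x : ℝ × ℝ => ENNReal.ofReal (densityIntegrand α x.swap) :=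
    ((measurable_densityIntegrand α).comp measurable_swap).ennreal_ofReal
  rw [Measure.volume_eq_prod, ← lintegral_prod_swap, ← Measure.volume_eq_prod,
    lintegral_prod_eq_lintegral_comp_mul_mul hf one_ne_zero]
  refine lintegral_congr fun p => ?_
  simp only [Prod.swap_prod_mk, one_pow, one_mul]
  rw [← ENNReal.ofReal_mul (abs_nonneg _), abs_mul_densityIntegrand]

lemma volume_torsorHeight_le_one (α : ℝ) :
    volume {y | torsorHeight α y ≤ 1}
      = ENNReal.ofReal (2 / 3) *
        ∫⁻ p : ℝ × ℝ, ENNReal.ofReal (|p.1| / reducedHeight α p.1 p.2) := by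
  set S := {y | torsorHeight α y ≤ 1}
  have hS : MeasurableSet S := measurableSet_le (measurable_torsorHeight α) measurable_const
  set χ : ℝ × ℝ × ℝ → ℝ≥0∞ := S.indicator 1
  have hχ : Measurable χ := measurable_one.indicator hS
  calc volume S = ∫⁻ y, χ y := (lintegral_indicator_one hS).symm
    _ = ∫⁻ u, ∫⁻ p : ℝ × ℝ, χ (u, p) := by
        rw [Measure.volume_eq_prod, lintegral_prod _ hχ.aemeasurable]
    _ = ∫⁻ u, ∫⁻ p : ℝ × ℝ,
          ENNReal.ofReal (u ^ 2 * |p.1|) * χ (u, u * p.1, u * p.1 * p.2) :=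
        lintegral_congr_ae ((Measure.ae_ne _ 0).mono fun u hu =>
          lintegral_prod_eq_lintegral_comp_mul_mul (hχ.comp (by fun_prop)) hu)
    _ = ∫⁻ p : ℝ × ℝ, ENNReal.ofReal |p.1| *
          ∫⁻ u in {u : ℝ | |u| ^ 3 * reducedHeight α p.1 p.2 ≤ 1}, ENNReal.ofReal (u ^ 2) := by
        rw [lintegral_lintegral_swap ((by fun_prop : Measurable fun q : ℝ × ℝ × ℝ =>
          ENNReal.ofReal (q.1 ^ 2 * |q.2.1|)).mul (hχ.comp (by fun_prop))).aemeasurable]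
        refine lintegral_congr fun p => ?_
        have hT : MeasurableSet {u : ℝ | |u| ^ 3 * reducedHeight α p.1 p.2 ≤ 1} :=
          measurableSet_le (by fun_prop) measurable_const
        rw [← lintegral_indicator hT, ← lintegral_const_mul' _ _ ENNReal.ofReal_ne_top]
        refine lintegral_congr fun u => ?_
        have hmem : (u, u * p.1, u * p.1 * p.2) ∈ S ↔ |u| ^ 3 * reducedHeight α p.1 p.2 ≤ 1 := by
          rw [mem_ofPred_eq, torsorHeight_mul]
        simp only [χ, indicator_apply, hmem, mem_ofPred_eq, Pi.one_apply]
        split_ifs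
        · rw [mul_one, mul_comm (u ^ 2), ENNReal.ofReal_mul (abs_nonneg _)]
        · simp
    _ = ∫⁻ p : ℝ × ℝ,
          ENNReal.ofReal (2 / 3) * ENNReal.ofReal (|p.1| / reducedHeight α p.1 p.2) := by
        refine lintegral_congr fun p => ?_
        have hR := one_le_reducedHeight α p.1 p.2
        rw [setLIntegral_sq_abs_pow_three_mul_le_one (by linarith),
          ← ENNReal.ofReal_mul (abs_nonneg _),
          ← ENNReal.ofReal_mul (by norm_num)]
        congr 1
        field_simp
    _ = _ := lintegral_const_mul' _ _ ENNReal.ofReal_ne_top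

end RealPlaceDensity

open MeasureTheory in
theorem real_place_density_general (α : ℝ) :
    volume {y : ℝ × ℝ × ℝ |
        max (max (max (max (|y.2.1 * (α * y.2.1 ^ 2 - y.2.2 ^ 2)|)
          (|y.1 * y.2.1 * y.2.2|)) (|y.1 ^ 3|)) (|y.1 * y.2.1 ^ 2|)) (|y.1 ^ 2 * y.2.1|)
        ≤ 1} ≠ ⊤ ∧
    ∫⁻ x : ℝ × ℝ, ENNReal.ofReal (1 / (|x.2| *
        max (max (max (max (|α * x.2 ^ 2 - x.1 ^ 2|) (|x.1|)) (|x.2|⁻¹)) (|x.2|)) 1))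
      = ENNReal.ofReal (3 / 2) *
        volume {y : ℝ × ℝ × ℝ |
          max (max (max (max (|y.2.1 * (α * y.2.1 ^ 2 - y.2.2 ^ 2)|)
            (|y.1 * y.2.1 * y.2.2|)) (|y.1 ^ 3|)) (|y.1 * y.2.1 ^ 2|)) (|y.1 ^ 2 * y.2.1|)
          ≤ 1} := by
  change volume {y | torsorHeight α y ≤ 1} ≠ ⊤ ∧
    ∫⁻ x, ENNReal.ofReal (densityIntegrand α x)
      = ENNReal.ofReal (3 / 2) * volume {y | torsorHeight α y ≤ 1}
  rw [volume_torsorHeight_le_one, lintegral_densityIntegrand, ← mul_assoc,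
    ← ENNReal.ofReal_mul (by norm_num)]
  refine ⟨ENNReal.mul_ne_top ENNReal.ofReal_ne_top (lintegral_abs_div_reducedHeight_ne_top α), ?_⟩
  norm_num

open MeasureTheory in
/-- The real-place density integral equals `(3/2)` times the volume of the
height-one region. -/
theorem real_place_density (a : 𝓞 K)
    (ha : ¬ IsSquare (algebraMap (𝓞 K) K a))
    (w : InfinitePlace K) (hw : w.IsReal) (α : ℝ)
    (hα : (α : ℂ) = w.embedding (algebraMap (𝓞 K) K a)) :
    volume {y : ℝ × ℝ × ℝ |
        max (max (max (max (|y.2.1 * (α * y.2.1 ^ 2 - y.2.2 ^ 2)|)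
          (|y.1 * y.2.1 * y.2.2|)) (|y.1 ^ 3|)) (|y.1 * y.2.1 ^ 2|)) (|y.1 ^ 2 * y.2.1|)
        ≤ 1} ≠ ⊤ ∧
    ∫⁻ x : ℝ × ℝ, ENNReal.ofReal (1 / (|x.2| *
        max (max (max (max (|α * x.2 ^ 2 - x.1 ^ 2|) (|x.1|)) (|x.2|⁻¹)) (|x.2|)) 1))
      = ENNReal.ofReal (3 / 2) *
        volume {y : ℝ × ℝ × ℝ |
          max (max (max (max (|y.2.1 * (α * y.2.1 ^ 2 - y.2.2 ^ 2)|)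
            (|y.1 * y.2.1 * y.2.2|)) (|y.1 ^ 3|)) (|y.1 * y.2.1 ^ 2|)) (|y.1 ^ 2 * y.2.1|)
          ≤ 1} :=
  real_place_density_general α

end ManinSplitTorsor
end
end
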